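/- Define, on infinite words over 2^AP, the satisfaction of flat formulas and the transition relation φ →^A φ' iff there exists φ'' ∈ U(φ) with φ' = φ''[A] ≠ false, where φ[A] removes the leading pseudo-atomic conjunct ψ if prop(ψ ∧ ψ') ⊆ A and returns false otherwise. Then for a flat formula φ and infinite word w: w ⊨ φ iff there exists φ' with φ →^{w(0)} φ' and w[1..] ⊨ φ'. -/

import Mathlib

/-- A flat LTL formula `ψ ∧ G ψ' ∧ ⋀ᵢ GF ψᵢ'' ∧ ⋀ⱼ F φⱼ`, where `ψ, ψ', ψᵢ''`
are pseudo-atomic (conjunctions of atoms, represented as finite sets) and each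
`φⱼ` is flat. -/
inductive Flat (AP : Type) : Type
  | mk : Finset AP → Finset AP → List (Finset AP) → List (Flat AP) → Flat AP

namespace Flat

variable {AP : Type} [DecidableEq AP]

/-- Conjunction of two flat formulas, merging the components. -/
def conj : Flat AP → Flat AP → Flat AP
  | mk ps g gf fs, mk ps' g' gf' fs' => mk (ps ∪ ps') (g ∪ g') (gf ++ gf') (fs ++ fs')

mutual
/-- Satisfaction of a flat formula by an infinite word at a position. -/
def Sat (w : ℕ → Finset AP) (n : ℕ) : Flat AP → Prop
  | mk ps g gf fs =>
      ps ⊆ w n ∧ (∀ m, n ≤ m → g ⊆ w m) ∧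
      (∀ c ∈ gf, ∀ m, n ≤ m → ∃ j, m ≤ j ∧ c ⊆ w j) ∧
      SatF w n fs

/-- `∀ φ ∈ fs, ∃ m ≥ n, Sat w m φ`. -/
def SatF (w : ℕ → Finset AP) (n : ℕ) : List (Flat AP) → Prop
  | [] => True
  | φ :: rest => (∃ m, n ≤ m ∧ Sat w m φ) ∧ SatF w n rest
end

mutual
/-- The unfolding `U(φ)`: for each `F φⱼ` conjunct, either keep it or replace it
by an element of `U(φⱼ)`. -/
def unfold : Flat AP → List (Flat AP)
  | mk ps g gf fs => (choices fs).map (conj (mk ps g gf []))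

/-- All combined choices for a list of `F`-subformulas. -/
def choices : List (Flat AP) → List (Flat AP)
  | [] => [mk ∅ ∅ [] []]
  | φ :: rest =>
      ((mk ∅ ∅ [] [φ]) :: unfold φ).flatMap (fun c => (choices rest).map (conj c))
end

/-- `φ[A]`: drop the leading pseudo-atomic conjunct if `prop(ψ ∧ ψ') ⊆ A`,
otherwise `false` (modelled as `none`). -/
def apply : Flat AP → Finset AP → Option (Flat AP)
  | mk ps g gf fs, A => if ps ∪ g ⊆ A then some (mk ∅ g gf fs) else none

/-- The transition relation `φ →^A φ'`. -/
def Trans (φ : Flat AP) (A : Finset AP) (φ' : Flat AP) : Prop :=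
  ∃ φ'' ∈ unfold φ, apply φ'' A = some φ'

end Flat

/-!
A flat formula holds at position `n` iff some member of its unfolding holds "in step form": its
pseudo-atomic conjunct and its `G`-conjunct hold at `n`, and what `apply` leaves of it holds from
`n + 1` on. Indeed `G ψ'` and `GF ψ''` are unchanged by splitting off the current position, and each
`F φⱼ` is witnessed either at `n` itself, where `φⱼ` is unfolded recursively, or strictly later,
where `F φⱼ` is kept. Taking `n = 0` and shifting the word by one letter gives the transition
relation.
-/

namespace Nat

variable {P : ℕ → Prop}

theorem forall_le_add_iff (n d : ℕ) :
    (∀ m, n ≤ m → P (m + d)) ↔ ∀ m, n + d ≤ m → P m :=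
  ⟨fun h m hm => by simpa [Nat.sub_add_cancel (le_of_add_le_right hm)] using h (m - d) (by omega),
    fun h m hm => h (m + d) (by omega)⟩

theorem exists_le_add_iff (n d : ℕ) :
    (∃ m, n ≤ m ∧ P (m + d)) ↔ ∃ m, n + d ≤ m ∧ P m :=
  ⟨fun ⟨m, hm, h⟩ => ⟨m + d, by omega, h⟩,
    fun ⟨m, hm, h⟩ => ⟨m - d, by omega, by rwa [Nat.sub_add_cancel (le_of_add_le_right hm)]⟩⟩

theorem forall_le_iff_and_forall_succ_le (n : ℕ) :
    (∀ m, n ≤ m → P m) ↔ P n ∧ ∀ m, n + 1 ≤ m → P m :=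
  ⟨fun h => ⟨h n le_rfl, fun m hm => h m (by omega)⟩,
    fun ⟨h₀, h⟩ m hm => (Nat.eq_or_lt_of_le hm).elim (· ▸ h₀) (h m)⟩

theorem forall_succ_le_exists_le_iff (n : ℕ) :
    (∀ m, n + 1 ≤ m → ∃ j, m ≤ j ∧ P j) ↔ ∀ m, n ≤ m → ∃ j, m ≤ j ∧ P j :=
  ⟨fun h m hm => (h (m + 1) (by omega)).imp fun _ ⟨hj, hP⟩ => ⟨by omega, hP⟩,
    fun h m hm => h m (by omega)⟩

theorem exists_le_iff_or_exists_succ_le (n : ℕ) :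
    (∃ m, n ≤ m ∧ P m) ↔ P n ∨ ∃ m, n + 1 ≤ m ∧ P m :=
  ⟨fun ⟨m, hm, h⟩ => (Nat.eq_or_lt_of_le hm).elim (fun e => .inl (e ▸ h)) fun hl => .inr ⟨m, hl, h⟩,
    fun h => h.elim (fun h => ⟨n, le_rfl, h⟩) fun ⟨m, hm, h⟩ => ⟨m, by omega, h⟩⟩

end Nat

namespace Flat

section Shift

variable {AP : Type}

theorem satF_iff_forall (w : ℕ → Finset AP) (n : ℕ) (fs : List (Flat AP)) :
    SatF w n fs ↔ ∀ φ ∈ fs, ∃ m, n ≤ m ∧ Sat w m φ := by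
  induction fs with
  | nil => simp [SatF]
  | cons φ rest ih => simp [SatF, ih]

theorem sat_mk (w : ℕ → Finset AP) (n : ℕ) (ps g : Finset AP) (gf : List (Finset AP))
    (fs : List (Flat AP)) :
    Sat w n (mk ps g gf fs) ↔ ps ⊆ w n ∧ (∀ m, n ≤ m → g ⊆ w m) ∧
      (∀ c ∈ gf, ∀ m, n ≤ m → ∃ j, m ≤ j ∧ c ⊆ w j) ∧ ∀ φ ∈ fs, ∃ m, n ≤ m ∧ Sat w m φ := by
  rw [Sat, satF_iff_forall]

theorem sat_shift (w : ℕ → Finset AP) (d n : ℕ) : ∀ φ : Flat AP,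
    Sat (fun k => w (k + d)) n φ ↔ Sat w (n + d) φ
  | mk ps g gf fs => by
    rw [sat_mk, sat_mk]
    refine and_congr Iff.rfl <|
      and_congr (Nat.forall_le_add_iff (P := (g ⊆ w ·)) n d) (and_congr ?_ ?_)
    · exact forall₂_congr fun c _ =>
        (forall₂_congr fun m _ => Nat.exists_le_add_iff (P := (c ⊆ w ·)) m d).trans
          (Nat.forall_le_add_iff (P := fun m => ∃ j, m ≤ j ∧ c ⊆ w j) n d)
    · exact forall₂_congr fun φ _ => (exists_congr fun m => and_congr_right fun _ =>
        sat_shift w d m φ).trans (Nat.exists_le_add_iff (P := (Sat w · φ)) n d)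

end Shift

section Step

variable {AP : Type} [DecidableEq AP]

def SatStep (w : ℕ → Finset AP) (n : ℕ) : Flat AP → Prop
  | mk ps g gf fs => ps ∪ g ⊆ w n ∧ Sat w (n + 1) (mk ∅ g gf fs)

theorem satStep_iff_apply (w : ℕ → Finset AP) (n : ℕ) (φ : Flat AP) :
    SatStep w n φ ↔ ∃ φ', apply φ (w n) = some φ' ∧ Sat w (n + 1) φ' := by
  obtain ⟨ps, g, gf, fs⟩ := φ
  by_cases h : ps ∪ g ⊆ w n <;> simp [SatStep, apply, h]

theorem sat_conj (w : ℕ → Finset AP) (n : ℕ) (a b : Flat AP) :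
    Sat w n (conj a b) ↔ Sat w n a ∧ Sat w n b := by
  obtain ⟨ps, g, gf, fs⟩ := a
  obtain ⟨ps', g', gf', fs'⟩ := b
  simp only [conj, sat_mk, Finset.union_subset_iff, List.forall_mem_append, forall_and]
  tauto

theorem satStep_conj (w : ℕ → Finset AP) (n : ℕ) (a b : Flat AP) :
    SatStep w n (conj a b) ↔ SatStep w n a ∧ SatStep w n b := by
  obtain ⟨ps, g, gf, fs⟩ := a
  obtain ⟨ps', g', gf', fs'⟩ := b
  have h := sat_conj w (n + 1) (mk ∅ g gf fs) (mk ∅ g' gf' fs')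
  simp only [conj, Finset.union_empty] at h
  simp only [SatStep, conj, h, Finset.union_subset_iff]
  tauto

theorem satStep_mk_nil (w : ℕ → Finset AP) (n : ℕ) (ps g : Finset AP) (gf : List (Finset AP)) :
    SatStep w n (mk ps g gf []) ↔ Sat w n (mk ps g gf []) := by
  simp only [SatStep, sat_mk, Finset.union_subset_iff, Finset.empty_subset, true_and,
    Nat.forall_succ_le_exists_le_iff,
    Nat.forall_le_iff_and_forall_succ_le (n := n) (P := (g ⊆ w ·))]
  tauto

theorem satStep_eventually (w : ℕ → Finset AP) (n : ℕ) (φ : Flat AP) :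
    SatStep w n (mk ∅ ∅ [] [φ]) ↔ ∃ m, n + 1 ≤ m ∧ Sat w m φ := by
  simp [SatStep, sat_mk]

theorem exists_satStep_mem_flatMap_conj (w : ℕ → Finset AP) (n : ℕ) (l₁ l₂ : List (Flat AP)) :
    (∃ c ∈ l₁.flatMap (fun a => l₂.map (conj a)), SatStep w n c) ↔
      (∃ a ∈ l₁, SatStep w n a) ∧ ∃ b ∈ l₂, SatStep w n b := by
  simp only [List.mem_flatMap, List.mem_map]
  constructor
  · rintro ⟨_, ⟨a, ha, b, hb, rfl⟩, h⟩
    obtain ⟨ha', hb'⟩ := (satStep_conj w n a b).mp h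
    exact ⟨⟨a, ha, ha'⟩, b, hb, hb'⟩
  · rintro ⟨⟨a, ha, ha'⟩, b, hb, hb'⟩
    exact ⟨conj a b, ⟨a, ha, b, hb, rfl⟩, (satStep_conj w n a b).mpr ⟨ha', hb'⟩⟩

mutual

theorem sat_iff_exists_mem_unfold (w : ℕ → Finset AP) (n : ℕ) :
    ∀ φ : Flat AP, Sat w n φ ↔ ∃ φ'' ∈ unfold φ, SatStep w n φ''
  | mk ps g gf fs => by
    have h := exists_satStep_mem_flatMap_conj w n [mk ps g gf []] (choices fs)
    simp only [List.flatMap_singleton, List.mem_singleton, exists_eq_left, satStep_mk_nil] at h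
    rw [unfold, h, ← satF_iff_exists_mem_choices]
    simp only [Sat, SatF, and_true]
    tauto

theorem satF_iff_exists_mem_choices (w : ℕ → Finset AP) (n : ℕ) :
    ∀ fs : List (Flat AP), SatF w n fs ↔ ∃ c ∈ choices fs, SatStep w n c
  | [] => by simp [SatF, choices, satStep_mk_nil, sat_mk]
  | φ :: rest => by
    rw [SatF, choices, exists_satStep_mem_flatMap_conj, ← satF_iff_exists_mem_choices w n rest,
      List.exists_mem_cons_iff, satStep_eventually, ← sat_iff_exists_mem_unfold w n φ,
      Nat.exists_le_iff_or_exists_succ_le, or_comm]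

end

end Step

end Flat

theorem stmt_19 {AP : Type} [DecidableEq AP] (w : ℕ → Finset AP) (φ : Flat AP) :
    Flat.Sat w 0 φ ↔
      ∃ φ', Flat.Trans φ (w 0) φ' ∧ Flat.Sat (fun n => w (n + 1)) 0 φ' := by
  rw [Flat.sat_iff_exists_mem_unfold]
  simp only [Flat.satStep_iff_apply, Flat.Trans, Flat.sat_shift]
  exact ⟨fun ⟨φ'', hφ'', φ', happ, hsat⟩ => ⟨φ', ⟨φ'', hφ'', happ⟩, hsat⟩,
    fun ⟨φ', ⟨φ'', hφ'', happ⟩, hsat⟩ => ⟨φ'', hφ'', φ', happ, hsat⟩⟩
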